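/- Let A' ⊆ ℝⁿ be a finite set, let c_α > 0 for all α ∈ A', let β ∈ ℝⁿ with β ∉ A' and c_β < 0, and suppose the exponential sum f(x) = ∑_{α∈A'} c_α·exp(⟨x,α⟩) + c_β·exp(⟨x,β⟩) is nonnegative on ℝⁿ. Then f is a finite sum of nonnegative circuit functions and nonnegative exponential monomials: there exist finitely many functions g_1,…,g_m and coefficients d_α ≥ 0 (α ∈ A') such that f = ∑_{i=1}^m g_i + ∑_{α∈A'} d_α·exp(⟨x,α⟩), where for each i there is an affinely independent subset S_i ⊆ A' with β in the convex hull of S_i, coefficients a^{(i)}_α ≥ 0 (α ∈ S_i) and b_i ≤ 0, such that g_i(x) = ∑_{α∈S_i} a^{(i)}_α·exp(⟨x,α⟩) + b_i·exp(⟨x,β⟩) is nonnegative on ℝⁿ. -/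

import Mathlib

open Finset Real Filter Topology

/-! Induction on `A'`. If some `y` has `⟨y, α⟩ ≤ ⟨y, β⟩` on `A'`, strictly for some `α`, then
`e^{-t⟨y, β⟩} f(x + t y) → f_F(x)` as `t → ∞`, where `f_F` keeps only the terms on the face
`F = {α ∈ A' | ⟨y, α⟩ = ⟨y, β⟩}`; so `f_F ≥ 0`, the induction hypothesis decomposes `f_F`, and the
terms of `A' \ F` are nonnegative monomials.

Otherwise `β` lies in the relative interior of `conv A'`, so `x ↦ ∑ c_α e^{⟨x, α - β⟩}` is coercive
on the span of the `α - β` and has a critical point `z`. The weights `λ_α ∝ c_α e^{⟨z, α⟩}` then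
have barycentre `β`; writing `λ` as a convex combination of barycentric weights with affinely
independent supports splits `f` into circuit functions, each nonnegative by Jensen's inequality for
`exp` and `f(z) ≥ 0`. -/

theorem exists_pos_mul_norm_le_of_pos {E : Type*} [NormedAddCommGroup E] [NormedSpace ℝ E]
    [FiniteDimensional ℝ E] {φ : E → ℝ} (hφ : Continuous φ)
    (hsmul : ∀ (t : ℝ) (x : E), 0 ≤ t → φ (t • x) = t * φ x) (hpos : ∀ x ≠ 0, 0 < φ x) :
    ∃ δ > 0, ∀ x, δ * ‖x‖ ≤ φ x := by
  have hφ0 : φ 0 = 0 := by simpa using hsmul 0 0 le_rfl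
  rcases subsingleton_or_nontrivial E with hE | hE
  · exact ⟨1, one_pos, fun x => by simp [Subsingleton.elim x 0, hφ0]⟩
  obtain ⟨z, hz, hmin⟩ := (isCompact_sphere (0 : E) 1).exists_isMinOn
    (NormedSpace.sphere_nonempty.2 zero_le_one) hφ.continuousOn
  have hz0 : z ≠ 0 := ne_zero_of_mem_unit_sphere ⟨z, hz⟩
  refine ⟨φ z, hpos z hz0, fun x => ?_⟩
  rcases eq_or_ne x 0 with rfl | hx
  · simp [hφ0]
  have hunit : ‖x‖⁻¹ • x ∈ Metric.sphere (0 : E) 1 := by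
    simp [norm_smul, hx]
  have : φ z ≤ ‖x‖⁻¹ * φ x := hsmul ‖x‖⁻¹ x (by positivity) ▸ hmin hunit
  calc φ z * ‖x‖ ≤ ‖x‖⁻¹ * φ x * ‖x‖ := by gcongr
    _ = φ x := by field_simp

section
variable {ι κ : Type*} [Fintype ι]

theorem dotProduct_eq_zero_of_mem_span {s : Set (ι → ℝ)} {v w : ι → ℝ}
    (hv : ∀ u ∈ s, v ⬝ᵥ u = 0) (hw : w ∈ Submodule.span ℝ s) : v ⬝ᵥ w = 0 := by
  induction hw using Submodule.span_induction with
  | mem u hu => exact hv u hu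
  | zero => exact dotProduct_zero v
  | add u w _ _ hu hw => rw [dotProduct_add, hu, hw, add_zero]
  | smul t u _ hu => rw [dotProduct_smul, hu, smul_zero]

theorem sum_exp_smul_eq_zero_of_isMinOn (s : Finset κ) (u : κ → ι → ℝ) (c : κ → ℝ)
    {x : ι → ℝ} (hx : x ∈ Submodule.span ℝ (u '' s))
    (hmin : IsMinOn (fun y => ∑ k ∈ s, c k * exp (y ⬝ᵥ u k)) (Submodule.span ℝ (u '' s)) x) :
    ∑ k ∈ s, (c k * exp (x ⬝ᵥ u k)) • u k = 0 := by
  set g := ∑ k ∈ s, (c k * exp (x ⬝ᵥ u k)) • u k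
  have hg : g ∈ Submodule.span ℝ (u '' s) :=
    Submodule.sum_mem _ fun k hk => Submodule.smul_mem _ _ (Submodule.subset_span ⟨k, hk, rfl⟩)
  have hderiv : HasDerivAt (fun t : ℝ => ∑ k ∈ s, c k * exp ((x + t • g) ⬝ᵥ u k)) (g ⬝ᵥ g) 0 := by
    have hterm (k : κ) : HasDerivAt (fun t : ℝ => c k * exp ((x + t • g) ⬝ᵥ u k))
        (c k * exp (x ⬝ᵥ u k) * (g ⬝ᵥ u k)) 0 := by
      simp only [add_dotProduct, smul_dotProduct, smul_eq_mul]
      simpa [mul_assoc] using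
        (((hasDerivAt_mul_const (x := 0) (g ⬝ᵥ u k)).const_add (x ⬝ᵥ u k)).exp).const_mul (c k)
    have hgg : g ⬝ᵥ g = ∑ k ∈ s, c k * exp (x ⬝ᵥ u k) * (g ⬝ᵥ u k) := by
      simp only [g, dotProduct_sum, dotProduct_smul, smul_eq_mul]
    rw [hgg]
    exact HasDerivAt.fun_sum fun k _ => hterm k
  have hlocal : IsLocalMin (fun t : ℝ => ∑ k ∈ s, c k * exp ((x + t • g) ⬝ᵥ u k)) 0 :=
    Eventually.of_forall fun t => by
      simpa using hmin (Submodule.add_mem _ hx (Submodule.smul_mem _ t hg))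
  exact dotProduct_self_eq_zero.1 (hlocal.hasDerivAt_eq_zero hderiv)

theorem exists_isMinOn_sum_exp (s : Finset κ) (u : κ → ι → ℝ) {c : κ → ℝ}
    (hc : ∀ k ∈ s, 0 < c k) (hu : ∀ y, (∀ k ∈ s, y ⬝ᵥ u k ≤ 0) → ∀ k ∈ s, y ⬝ᵥ u k = 0) :
    ∃ x ∈ Submodule.span ℝ (u '' s),
      IsMinOn (fun y => ∑ k ∈ s, c k * exp (y ⬝ᵥ u k)) (Submodule.span ℝ (u '' s)) x := by
  set V := Submodule.span ℝ (u '' s)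
  set H : V → ℝ := fun v => ∑ k ∈ s, c k * exp ((v : ι → ℝ) ⬝ᵥ u k)
  -- a positively homogeneous minorant of `H`, positive on `V \ {0}` by `hu`
  set φ : V → ℝ := fun v => ∑ k ∈ s, c k * max ((v : ι → ℝ) ⬝ᵥ u k) 0
  have hφ_cont : Continuous φ := by fun_prop
  have hφ_smul (t : ℝ) (v : V) (ht : 0 ≤ t) : φ (t • v) = t * φ v := by
    simp only [φ, Submodule.coe_smul, smul_dotProduct, smul_eq_mul, mul_sum]
    exact sum_congr rfl fun k _ => by rw [mul_left_comm t, mul_max_of_nonneg _ _ ht, mul_zero]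
  have hφ_pos (v : V) (hv : v ≠ 0) : 0 < φ v := by
    have hterm : ∀ k ∈ s, 0 ≤ c k * max ((v : ι → ℝ) ⬝ᵥ u k) 0 :=
      fun k hk => mul_nonneg (hc k hk).le (le_max_right _ _)
    refine (sum_nonneg hterm).lt_of_ne fun hφ0 => hv ?_
    have hle : ∀ k ∈ s, (v : ι → ℝ) ⬝ᵥ u k ≤ 0 := fun k hk => by
      have := (sum_eq_zero_iff_of_nonneg hterm).1 hφ0.symm k hk
      simpa [(hc k hk).ne'] using this
    have hperp : ∀ w ∈ u '' s, (v : ι → ℝ) ⬝ᵥ w = 0 := by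
      rintro _ ⟨k, hk, rfl⟩
      exact hu v hle k hk
    exact Subtype.ext (dotProduct_self_eq_zero.1 (dotProduct_eq_zero_of_mem_span hperp v.2))
  obtain ⟨δ, hδ, hφδ⟩ := exists_pos_mul_norm_le_of_pos hφ_cont hφ_smul hφ_pos
  have hHφ (v : V) : φ v ≤ H v := sum_le_sum fun k hk =>
    mul_le_mul_of_nonneg_left (max_le (by linarith [add_one_le_exp ((v : ι → ℝ) ⬝ᵥ u k)])
      (exp_pos _).le) (hc k hk).le
  have hH_tendsto : Tendsto H (cocompact V) atTop :=
    tendsto_atTop_mono (fun v => (hφδ v).trans (hHφ v))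
      (tendsto_norm_cocompact_atTop.const_mul_atTop hδ)
  obtain ⟨x, hx⟩ := (show Continuous H by fun_prop).exists_forall_le hH_tendsto
  exact ⟨x, x.2, fun y hy => hx ⟨y, hy⟩⟩

theorem exists_sum_exp_smul_eq_zero (s : Finset κ) (u : κ → ι → ℝ) {c : κ → ℝ}
    (hc : ∀ k ∈ s, 0 < c k) (hu : ∀ y, (∀ k ∈ s, y ⬝ᵥ u k ≤ 0) → ∀ k ∈ s, y ⬝ᵥ u k = 0) :
    ∃ x, ∑ k ∈ s, (c k * exp (x ⬝ᵥ u k)) • u k = 0 :=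
  let ⟨x, hx, hmin⟩ := exists_isMinOn_sum_exp s u hc hu
  ⟨x, sum_exp_smul_eq_zero_of_isMinOn s u c hx hmin⟩
end

section
variable {κ : Type*} {E : Type*} [AddCommGroup E] [Module ℝ E]

theorem exists_pos_sub_mul_nonneg_filter_ssubset {A : Finset κ} {l w : κ → ℝ}
    (hl : ∀ a ∈ A, 0 ≤ l a) (hw : ∀ a ∈ A, l a = 0 → w a = 0) (hpos : ∃ a ∈ A, 0 < w a) :
    ∃ t > 0, (∀ a ∈ A, 0 ≤ l a - t * w a) ∧
      A.filter (fun a => l a - t * w a ≠ 0) ⊂ A.filter (fun a => l a ≠ 0) := by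
  obtain ⟨a₀, ha₀, hmin⟩ := exists_min_image (A.filter (0 < w ·)) (fun a => l a / w a)
    (let ⟨a, ha, hwa⟩ := hpos; ⟨a, mem_filter.2 ⟨ha, hwa⟩⟩)
  obtain ⟨ha₀A, hw₀⟩ := mem_filter.1 ha₀
  have hl₀ : 0 < l a₀ := (hl a₀ ha₀A).lt_of_ne fun h => hw₀.ne' (hw a₀ ha₀A h.symm)
  have ht : 0 < l a₀ / w a₀ := div_pos hl₀ hw₀
  refine ⟨l a₀ / w a₀, ht, fun a ha => ?_, ?_⟩
  · rcases lt_or_ge 0 (w a) with hwa | hwa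
    · have := (le_div_iff₀ hwa).1 (hmin a (mem_filter.2 ⟨ha, hwa⟩))
      linarith
    · nlinarith [hl a ha]
  refine (ssubset_iff_of_subset fun a ha => ?_).2 ⟨a₀, mem_filter.2 ⟨ha₀A, hl₀.ne'⟩, ?_⟩
  · obtain ⟨haA, hne⟩ := mem_filter.1 ha
    refine mem_filter.2 ⟨haA, fun hla => hne ?_⟩
    rw [hla, hw a haA hla, mul_zero, sub_zero]
  · simp [div_mul_cancel₀ _ hw₀.ne']

structure IsBarycentricWeight (A : Finset E) (β : E) (l : E → ℝ) : Prop where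
  nonneg : ∀ α ∈ A, 0 ≤ l α
  sum_eq_one : ∑ α ∈ A, l α = 1
  sum_smul_eq : ∑ α ∈ A, l α • α = β

namespace IsBarycentricWeight

variable {A : Finset E} {β : E} {l : E → ℝ}

theorem sub_mul_of_nonneg {w : E → ℝ} {t : ℝ} (hl : IsBarycentricWeight A β l)
    (hw₀ : ∑ α ∈ A, w α = 0) (hw₁ : ∑ α ∈ A, w α • α = 0)
    (hnn : ∀ α ∈ A, 0 ≤ l α - t * w α) : IsBarycentricWeight A β (fun α => l α - t * w α) where
  nonneg := hnn
  sum_eq_one := by rw [sum_sub_distrib, ← mul_sum, hw₀, hl.sum_eq_one, mul_zero, sub_zero]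
  sum_smul_eq := by
    simp only [sub_smul, mul_smul, sum_sub_distrib, ← smul_sum, hw₁, hl.sum_smul_eq, smul_zero,
      sub_zero]

theorem of_sum_smul_sub_eq_zero {p : E → ℝ} (hp : ∀ α ∈ A, 0 ≤ p α)
    (hpos : 0 < ∑ α ∈ A, p α) (h : ∑ α ∈ A, p α • (α - β) = 0) :
    IsBarycentricWeight A β (fun α => p α / ∑ α ∈ A, p α) := by
  have hpβ : ∑ α ∈ A, p α • α = (∑ α ∈ A, p α) • β := by
    rwa [sum_congr rfl fun α _ => smul_sub (p α) α β, sum_sub_distrib, ← sum_smul,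
      sub_eq_zero] at h
  refine ⟨fun α hα => div_nonneg (hp α hα) hpos.le, by rw [← sum_div, div_self hpos.ne'], ?_⟩
  simp only [div_eq_inv_mul, mul_smul]
  rw [← smul_sum, hpβ, smul_smul, inv_mul_cancel₀ hpos.ne', one_smul]

theorem exists_mem_segment (hl : IsBarycentricWeight A β l)
    (hdep : ¬ AffineIndependent ℝ (fun p : (A.filter (l · ≠ 0) : Set E) => (p : E))) :
    ∃ l₁ l₂, (IsBarycentricWeight A β l₁ ∧ #(A.filter (l₁ · ≠ 0)) < #(A.filter (l · ≠ 0))) ∧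
      (IsBarycentricWeight A β l₂ ∧ #(A.filter (l₂ · ≠ 0)) < #(A.filter (l · ≠ 0))) ∧
      l ∈ segment ℝ l₁ l₂ := by
  classical
  set F := A.filter (l · ≠ 0)
  obtain ⟨w, hw₁, hw₀, α₀, hα₀, hwα₀⟩ := exists_nontrivial_relation_sum_zero_of_not_affine_ind hdep
  set W : E → ℝ := fun α => if α ∈ F then w α else 0
  have hW₀ : ∑ α ∈ A, W α = 0 := by
    rw [sum_ite_mem, inter_eq_right.2 (filter_subset _ _), hw₀]
  have hW₁ : ∑ α ∈ A, W α • α = 0 := by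
    simp only [W, ite_smul, zero_smul]
    rw [sum_ite_mem, inter_eq_right.2 (filter_subset _ _), hw₁]
  have hWl : ∀ α ∈ A, l α = 0 → W α = 0 := fun α _ hα => by simp [W, F, hα]
  have hW_ne : ∃ α ∈ A, W α ≠ 0 :=
    ⟨α₀, (mem_filter.1 hα₀).1, by simpa [W, hα₀] using hwα₀⟩
  -- move along the affine relation `W` in both directions until some weight vanishes
  obtain ⟨t₁, ht₁, hnn₁, hsupp₁⟩ := exists_pos_sub_mul_nonneg_filter_ssubset hl.nonneg hWl
    (exists_pos_of_sum_zero_of_exists_nonzero W hW₀ hW_ne)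
  obtain ⟨t₂, ht₂, hnn₂, hsupp₂⟩ := exists_pos_sub_mul_nonneg_filter_ssubset (w := -W) hl.nonneg
    (fun α hα h => by simp [hWl α hα h])
    (exists_pos_of_sum_zero_of_exists_nonzero (-W) (by simp [sum_neg_distrib, hW₀])
      (let ⟨α, hα, h⟩ := hW_ne; ⟨α, hα, neg_ne_zero.2 h⟩))
  refine ⟨_, _, ⟨hl.sub_mul_of_nonneg hW₀ hW₁ hnn₁, card_lt_card hsupp₁⟩,
    ⟨hl.sub_mul_of_nonneg (by simp [sum_neg_distrib, hW₀])
      (by simp [neg_smul, sum_neg_distrib, hW₁]) hnn₂, card_lt_card hsupp₂⟩,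
    t₂ / (t₁ + t₂), t₁ / (t₁ + t₂), by positivity, by positivity, by field_simp; ring, ?_⟩
  funext α
  simp only [Pi.add_apply, Pi.smul_apply, Pi.neg_apply, smul_eq_mul]
  field_simp
  ring

theorem mem_convexHull_affineIndependent (hl : IsBarycentricWeight A β l) :
    l ∈ convexHull ℝ {l' | IsBarycentricWeight A β l' ∧
      AffineIndependent ℝ (fun p : (A.filter (l' · ≠ 0) : Set E) => (p : E))} := by
  induction h : #(A.filter (l · ≠ 0)) using Nat.strong_induction_on generalizing l with
  | _ k ih =>
  by_cases hind : AffineIndependent ℝ (fun p : (A.filter (l · ≠ 0) : Set E) => (p : E))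
  · exact subset_convexHull ℝ _ ⟨hl, hind⟩
  obtain ⟨l₁, l₂, ⟨hl₁, hcard₁⟩, ⟨hl₂, hcard₂⟩, hseg⟩ := hl.exists_mem_segment hind
  exact (convex_convexHull ℝ _).segment_subset (ih _ (h ▸ hcard₁) hl₁ rfl)
    (ih _ (h ▸ hcard₂) hl₂ rfl) hseg

theorem exists_affineIndependent_decomposition (hl : IsBarycentricWeight A β l) :
    ∃ (m : ℕ) (θ : Fin m → ℝ) (lam : Fin m → E → ℝ), (∀ i, 0 ≤ θ i) ∧ ∑ i, θ i = 1 ∧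
      (∀ i, IsBarycentricWeight A β (lam i) ∧
        AffineIndependent ℝ (fun p : (A.filter (lam i · ≠ 0) : Set E) => (p : E))) ∧
      ∑ i, θ i • lam i = l := by
  obtain ⟨κ, _, θ, lam, hθ, hθ₁, hlam, hsum⟩ :=
    mem_convexHull_iff_exists_fintype.1 hl.mem_convexHull_affineIndependent
  let e := Fintype.equivFin κ
  exact ⟨_, θ ∘ e.symm, lam ∘ e.symm, fun i => hθ _, (e.symm.sum_comp θ).trans hθ₁,
    fun i => hlam _, (e.symm.sum_comp fun i => θ i • lam i).trans hsum⟩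

theorem mem_convexHull_support (hl : IsBarycentricWeight A β l) :
    β ∈ convexHull ℝ (A.filter (l · ≠ 0) : Set E) := by
  have hsum₀ : ∑ α ∈ A.filter (l · ≠ 0), l α = 1 := by rw [sum_filter_ne_zero, hl.sum_eq_one]
  have hsum₁ : ∑ α ∈ A.filter (l · ≠ 0), l α • α = β := by
    rw [sum_filter_of_ne fun α _ h => left_ne_zero_of_smul h, hl.sum_smul_eq]
  have hcm := (A.filter (l · ≠ 0)).centerMass_mem_convexHull (z := id)
    (fun α hα => hl.nonneg α (mem_filter.1 hα).1) (hsum₀ ▸ one_pos) (fun α hα => hα)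
  rwa [centerMass, hsum₀, inv_one, one_smul, funext id_def, hsum₁] at hcm

end IsBarycentricWeight
end

section ExpSum
variable {ι : Type*} [Fintype ι]

noncomputable def expSum (A : Finset (ι → ℝ)) (v : (ι → ℝ) → ℝ) (x : ι → ℝ) : ℝ :=
  ∑ α ∈ A, v α * exp (x ⬝ᵥ α)

namespace IsBarycentricWeight

variable {A : Finset (ι → ℝ)} {β : ι → ℝ} {l : (ι → ℝ) → ℝ}

theorem one_le_sum_mul_exp (hl : IsBarycentricWeight A β l) (y : ι → ℝ) :
    1 ≤ ∑ α ∈ A, l α * exp (y ⬝ᵥ (α - β)) := by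
  have hcenter : ∑ α ∈ A, l α * y ⬝ᵥ (α - β) = 0 := by
    calc ∑ α ∈ A, l α * y ⬝ᵥ (α - β) = y ⬝ᵥ ∑ α ∈ A, l α • (α - β) := by
          simp only [dotProduct_sum, dotProduct_smul, smul_eq_mul]
      _ = 0 := by
          rw [sum_congr rfl fun α _ => smul_sub (l α) α β, sum_sub_distrib, hl.sum_smul_eq,
            ← sum_smul, hl.sum_eq_one, one_smul, sub_self, dotProduct_zero]
  have hjensen :=
    convexOn_exp.map_sum_le hl.nonneg hl.sum_eq_one fun α _ => Set.mem_univ (y ⬝ᵥ (α - β))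
  simp only [smul_eq_mul] at hjensen
  rwa [hcenter, exp_zero] at hjensen

theorem sum_mul_exp_add_nonneg (hl : IsBarycentricWeight A β l) {K b : ℝ} (hK : 0 ≤ K)
    (hKb : 0 ≤ K + b) (z x : ι → ℝ) :
    0 ≤ ∑ α ∈ A, l α * (K * exp (-(z ⬝ᵥ (α - β)))) * exp (x ⬝ᵥ α) + b * exp (x ⬝ᵥ β) := by
  have hterm (α : ι → ℝ) : l α * (K * exp (-(z ⬝ᵥ (α - β)))) * exp (x ⬝ᵥ α)
      = K * exp (x ⬝ᵥ β) * (l α * exp ((x - z) ⬝ᵥ (α - β))) := by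
    have hexp : exp (-(z ⬝ᵥ (α - β))) * exp (x ⬝ᵥ α) = exp (x ⬝ᵥ β) * exp ((x - z) ⬝ᵥ (α - β)) := by
      rw [← exp_add, ← exp_add]
      simp only [sub_dotProduct, dotProduct_sub]
      ring_nf
    linear_combination (l α * K) * hexp
  rw [sum_congr rfl fun α _ => hterm α, ← mul_sum]
  calc 0 ≤ (K + b) * exp (x ⬝ᵥ β) := mul_nonneg hKb (exp_pos _).le
    _ = K * exp (x ⬝ᵥ β) * 1 + b * exp (x ⬝ᵥ β) := by ring
    _ ≤ _ := by gcongr; exact hl.one_le_sum_mul_exp (x - z)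

end IsBarycentricWeight

theorem tendsto_exp_mul_atTop_of_nonpos {d : ℝ} (hd : d ≤ 0) :
    Tendsto (fun t => exp (t * d)) atTop (𝓝 (if d = 0 then 1 else 0)) := by
  split_ifs with h
  · simp [h]
  · exact tendsto_exp_atBot.comp (tendsto_id.atTop_mul_const_of_neg (hd.lt_of_ne h))

theorem expSum_filter_add_nonneg {A : Finset (ι → ℝ)} {c : (ι → ℝ) → ℝ} {β y : ι → ℝ} {b : ℝ}
    (hnn : ∀ x, 0 ≤ expSum A c x + b * exp (x ⬝ᵥ β)) (hy : ∀ α ∈ A, y ⬝ᵥ α ≤ y ⬝ᵥ β)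
    (x : ι → ℝ) : 0 ≤ expSum (A.filter (y ⬝ᵥ · = y ⬝ᵥ β)) c x + b * exp (x ⬝ᵥ β) := by
  have hrescale (t : ℝ) :
      exp (-(t * y ⬝ᵥ β)) * (expSum A c (x + t • y) + b * exp ((x + t • y) ⬝ᵥ β))
        = ∑ α ∈ A, c α * exp (x ⬝ᵥ α) * exp (t * (y ⬝ᵥ α - y ⬝ᵥ β)) + b * exp (x ⬝ᵥ β) := by
    simp only [expSum, mul_add, mul_sum, add_dotProduct, smul_dotProduct, smul_eq_mul, exp_add,
      mul_sub, exp_sub, exp_neg]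
    congr 1
    · exact sum_congr rfl fun α _ => by field_simp
    · field_simp
  have hlim : Tendsto
      (fun t => ∑ α ∈ A, c α * exp (x ⬝ᵥ α) * exp (t * (y ⬝ᵥ α - y ⬝ᵥ β)) + b * exp (x ⬝ᵥ β))
      atTop (𝓝 (expSum (A.filter (y ⬝ᵥ · = y ⬝ᵥ β)) c x + b * exp (x ⬝ᵥ β))) := by
    refine Tendsto.add_const _ ?_
    rw [expSum, sum_filter]
    refine tendsto_finsetSum _ fun α hα => ?_
    simpa [sub_eq_zero] using
      (tendsto_exp_mul_atTop_of_nonpos (sub_nonpos.2 (hy α hα))).const_mul (c α * exp (x ⬝ᵥ α))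
  exact ge_of_tendsto' hlim fun t => hrescale t ▸ mul_nonneg (exp_pos _).le (hnn _)

theorem expSum_filter_of_ne {A : Finset (ι → ℝ)} {p : (ι → ℝ) → Prop} [DecidablePred p]
    {v : (ι → ℝ) → ℝ} (hv : ∀ α ∈ A, v α ≠ 0 → p α) (x : ι → ℝ) :
    expSum (A.filter p) v x = expSum A v x :=
  sum_filter_of_ne fun α hα h => hv α hα (left_ne_zero_of_mul h)

def IsNonnegCircuit (β : ι → ℝ) (S : Finset (ι → ℝ)) (a : (ι → ℝ) → ℝ) (b : ℝ) : Prop :=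
  AffineIndependent ℝ (fun p : (S : Set (ι → ℝ)) => (p : ι → ℝ)) ∧
    β ∈ convexHull ℝ (S : Set (ι → ℝ)) ∧ (∀ α ∈ S, 0 ≤ a α) ∧ b ≤ 0 ∧
    ∀ x, 0 ≤ expSum S a x + b * exp (x ⬝ᵥ β)

def HasSONCDecomposition (A : Finset (ι → ℝ)) (c : (ι → ℝ) → ℝ) (β : ι → ℝ) (cβ : ℝ) : Prop :=
  ∃ (m : ℕ) (S : Fin m → Finset (ι → ℝ)) (a : Fin m → (ι → ℝ) → ℝ) (b : Fin m → ℝ)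
    (d : (ι → ℝ) → ℝ), (∀ α ∈ A, 0 ≤ d α) ∧ (∀ i, S i ⊆ A ∧ IsNonnegCircuit β (S i) (a i) (b i)) ∧
    ∀ x, expSum A c x + cβ * exp (x ⬝ᵥ β)
      = ∑ i, (expSum (S i) (a i) x + b i * exp (x ⬝ᵥ β)) + expSum A d x

theorem IsBarycentricWeight.isNonnegCircuit {A : Finset (ι → ℝ)} {β : ι → ℝ} {l : (ι → ℝ) → ℝ}
    (hl : IsBarycentricWeight A β l)
    (hind : AffineIndependent ℝ (fun p : (A.filter (l · ≠ 0) : Set (ι → ℝ)) => (p : ι → ℝ)))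
    {θ K b : ℝ} (hθ : 0 ≤ θ) (hK : 0 ≤ K) (hb : b ≤ 0) (hKb : 0 ≤ K + b) (z : ι → ℝ) :
    IsNonnegCircuit β (A.filter (l · ≠ 0)) (fun α => θ * l α * (K * exp (-(z ⬝ᵥ (α - β)))))
      (θ * b) := by
  refine ⟨hind, hl.mem_convexHull_support, fun α hα => ?_, mul_nonpos_of_nonneg_of_nonpos hθ hb,
    fun x => ?_⟩
  · have := hl.nonneg α (mem_filter.1 hα).1
    positivity
  rw [expSum_filter_of_ne (p := (l · ≠ 0))
    (fun _ _ h => right_ne_zero_of_mul (left_ne_zero_of_mul h)) x]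
  calc 0 ≤ θ * (∑ α ∈ A, l α * (K * exp (-(z ⬝ᵥ (α - β)))) * exp (x ⬝ᵥ α) + b * exp (x ⬝ᵥ β)) :=
        mul_nonneg hθ (hl.sum_mul_exp_add_nonneg hK hKb z x)
    _ = _ := by simp only [expSum, mul_add, mul_sum, mul_assoc]

theorem HasSONCDecomposition.mono {F A : Finset (ι → ℝ)} {c : (ι → ℝ) → ℝ} {β : ι → ℝ} {cβ : ℝ}
    (h : HasSONCDecomposition F c β cβ) (hFA : F ⊆ A) (hc : ∀ α ∈ A, 0 ≤ c α) :
    HasSONCDecomposition A c β cβ := by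
  classical
  obtain ⟨m, S, a, b, d, hd, hS, heq⟩ := h
  refine ⟨m, S, a, b, F.piecewise d c, fun α hα => ?_, fun i => ⟨(hS i).1.trans hFA, (hS i).2⟩,
    fun x => ?_⟩
  · by_cases hαF : α ∈ F
    · exact F.piecewise_eq_of_mem d c hαF ▸ hd α hαF
    · exact F.piecewise_eq_of_notMem d c hαF ▸ hc α hα
  have hsplit (v : (ι → ℝ) → ℝ) : expSum A v x = expSum (A \ F) v x + expSum F v x :=
    (sum_sdiff hFA).symm
  have hout : expSum (A \ F) (F.piecewise d c) x = expSum (A \ F) c x :=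
    sum_congr rfl fun α hα => by rw [F.piecewise_eq_of_notMem d c (mem_sdiff.1 hα).2]
  have hin : expSum F (F.piecewise d c) x = expSum F d x :=
    sum_congr rfl fun α hα => by rw [F.piecewise_eq_of_mem d c hα]
  rw [hsplit c, hsplit, hout, hin, add_assoc, heq x]
  ring

theorem hasSONCDecomposition_of_sum_exp_smul_eq_zero {A : Finset (ι → ℝ)} {c : (ι → ℝ) → ℝ}
    {β : ι → ℝ} {cβ : ℝ} (hc : ∀ α ∈ A, 0 ≤ c α) (hcβ : cβ < 0) {z : ι → ℝ}
    (hz : ∑ α ∈ A, (c α * exp (z ⬝ᵥ (α - β))) • (α - β) = 0)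
    (hfz : 0 ≤ expSum A c z + cβ * exp (z ⬝ᵥ β)) : HasSONCDecomposition A c β cβ := by
  set p : (ι → ℝ) → ℝ := fun α => c α * exp (z ⬝ᵥ (α - β))
  set K := ∑ α ∈ A, p α
  have hfz_eq : expSum A c z + cβ * exp (z ⬝ᵥ β) = (K + cβ) * exp (z ⬝ᵥ β) := by
    simp only [expSum, K, p, add_mul, sum_mul, mul_assoc, ← exp_add, dotProduct_sub, sub_add_cancel]
  have hKcβ : 0 ≤ K + cβ := nonneg_of_mul_nonneg_left (hfz_eq ▸ hfz) (exp_pos _)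
  have hK : 0 < K := by linarith
  have hl : IsBarycentricWeight A β (fun α => p α / K) :=
    .of_sum_smul_sub_eq_zero (fun α hα => mul_nonneg (hc α hα) (exp_pos _).le) hK hz
  obtain ⟨m, θ, lam, hθ, hθ₁, hlam, hsum⟩ := hl.exists_affineIndependent_decomposition
  set w : (ι → ℝ) → ℝ := fun α => K * exp (-(z ⬝ᵥ (α - β)))
  have hcoef (α : ι → ℝ) : ∑ i, θ i * lam i α * w α = c α := by
    have hlα := congrFun hsum α
    simp only [Finset.sum_apply, Pi.smul_apply, smul_eq_mul] at hlα
    rw [← sum_mul, hlα]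
    simp only [p, w, exp_neg]
    field_simp
  have hcircuits (x : ι → ℝ) :
      ∑ i, expSum (A.filter (lam i · ≠ 0)) (fun α => θ i * lam i α * w α) x = expSum A c x :=
    calc _ = ∑ i, ∑ α ∈ A, θ i * lam i α * w α * exp (x ⬝ᵥ α) :=
          sum_congr rfl fun i _ => expSum_filter_of_ne (p := (lam i · ≠ 0))
            (fun _ _ h => right_ne_zero_of_mul (left_ne_zero_of_mul h)) x
      _ = expSum A c x := by
          rw [sum_comm]
          exact sum_congr rfl fun α _ => by rw [← sum_mul, hcoef]
  refine ⟨m, fun i => A.filter (lam i · ≠ 0), fun i α => θ i * lam i α * w α, fun i => θ i * cβ, 0,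
    fun _ _ => le_rfl, fun i => ⟨filter_subset _ _,
      (hlam i).1.isNonnegCircuit (hlam i).2 (hθ i) hK.le hcβ.le hKcβ z⟩, fun x => ?_⟩
  have hzero : expSum A 0 x = 0 := by simp [expSum]
  rw [sum_add_distrib, hcircuits, ← sum_mul, ← sum_mul, hθ₁, one_mul, hzero, add_zero]

end ExpSum

theorem age_is_sonc_general {n : ℕ}
    (A' : Finset (Fin n → ℝ)) (c : (Fin n → ℝ) → ℝ) (hc : ∀ α ∈ A', 0 < c α)
    (β : Fin n → ℝ) (cβ : ℝ) (hcβ : cβ < 0)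
    (hnn : ∀ x : Fin n → ℝ,
      0 ≤ (∑ α ∈ A', c α * Real.exp (∑ i, x i * α i)) + cβ * Real.exp (∑ i, x i * β i)) :
    ∃ (m : ℕ) (S : Fin m → Finset (Fin n → ℝ)) (a : Fin m → (Fin n → ℝ) → ℝ)
      (b : Fin m → ℝ) (d : (Fin n → ℝ) → ℝ),
      (∀ α ∈ A', 0 ≤ d α) ∧
      (∀ i : Fin m,
        S i ⊆ A' ∧
        AffineIndependent ℝ (fun p : (S i : Set (Fin n → ℝ)) => (p : Fin n → ℝ)) ∧
        β ∈ convexHull ℝ ((S i : Set (Fin n → ℝ))) ∧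
        (∀ α ∈ S i, 0 ≤ a i α) ∧ b i ≤ 0 ∧
        (∀ x : Fin n → ℝ,
          0 ≤ (∑ α ∈ S i, a i α * Real.exp (∑ j, x j * α j)) + b i * Real.exp (∑ j, x j * β j))) ∧
      (∀ x : Fin n → ℝ,
        (∑ α ∈ A', c α * Real.exp (∑ j, x j * α j)) + cβ * Real.exp (∑ j, x j * β j)
          = (∑ i : Fin m,
              ((∑ α ∈ S i, a i α * Real.exp (∑ j, x j * α j)) + b i * Real.exp (∑ j, x j * β j)))
            + ∑ α ∈ A', d α * Real.exp (∑ j, x j * α j)) := by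
  change ∀ x, 0 ≤ expSum A' c x + cβ * exp (x ⬝ᵥ β) at hnn
  change HasSONCDecomposition A' c β cβ
  induction A' using Finset.strongInduction with
  | _ A' ih =>
  by_cases hface : ∃ y : Fin n → ℝ, (∀ α ∈ A', y ⬝ᵥ α ≤ y ⬝ᵥ β) ∧ ∃ α ∈ A', y ⬝ᵥ α < y ⬝ᵥ β
  · obtain ⟨y, hy, α₀, hα₀, hlt⟩ := hface
    exact (ih _ (filter_ssubset.2 ⟨α₀, hα₀, hlt.ne⟩) (fun α hα => hc α (mem_filter.1 hα).1)
      (expSum_filter_add_nonneg hnn hy)).mono (filter_subset _ _) fun α hα => (hc α hα).le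
  push Not at hface
  have hrel (y : Fin n → ℝ) (hy : ∀ α ∈ A', y ⬝ᵥ (α - β) ≤ 0) (α) (hα : α ∈ A') :
      y ⬝ᵥ (α - β) = 0 := by
    simp only [dotProduct_sub, sub_nonpos] at hy ⊢
    exact sub_eq_zero.2 ((hy α hα).antisymm (hface y hy α hα))
  obtain ⟨z, hz⟩ := exists_sum_exp_smul_eq_zero A' (· - β) hc hrel
  exact hasSONCDecomposition_of_sum_exp_smul_eq_zero (fun α hα => (hc α hα).le) hcβ hz (hnn z)

/-- Every nonnegative AGE exponential sum is a sum of nonnegative circuit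
functions (supported on affinely independent subsets of `A'` together with `β`) and
nonnegative exponential monomials. -/
theorem age_is_sonc {n : ℕ}
    (A' : Finset (Fin n → ℝ)) (c : (Fin n → ℝ) → ℝ) (hc : ∀ α ∈ A', 0 < c α)
    (β : Fin n → ℝ) (hβ : β ∉ A') (cβ : ℝ) (hcβ : cβ < 0)
    (hnn : ∀ x : Fin n → ℝ,
      0 ≤ (∑ α ∈ A', c α * Real.exp (∑ i, x i * α i)) + cβ * Real.exp (∑ i, x i * β i)) :
    ∃ (m : ℕ) (S : Fin m → Finset (Fin n → ℝ)) (a : Fin m → (Fin n → ℝ) → ℝ)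
      (b : Fin m → ℝ) (d : (Fin n → ℝ) → ℝ),
      (∀ α ∈ A', 0 ≤ d α) ∧
      (∀ i : Fin m,
        S i ⊆ A' ∧
        AffineIndependent ℝ (fun p : (S i : Set (Fin n → ℝ)) => (p : Fin n → ℝ)) ∧
        β ∈ convexHull ℝ ((S i : Set (Fin n → ℝ))) ∧
        (∀ α ∈ S i, 0 ≤ a i α) ∧ b i ≤ 0 ∧
        (∀ x : Fin n → ℝ,
          0 ≤ (∑ α ∈ S i, a i α * Real.exp (∑ j, x j * α j)) + b i * Real.exp (∑ j, x j * β j))) ∧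
      (∀ x : Fin n → ℝ,
        (∑ α ∈ A', c α * Real.exp (∑ j, x j * α j)) + cβ * Real.exp (∑ j, x j * β j)
          = (∑ i : Fin m,
              ((∑ α ∈ S i, a i α * Real.exp (∑ j, x j * α j)) + b i * Real.exp (∑ j, x j * β j)))
            + ∑ α ∈ A', d α * Real.exp (∑ j, x j * α j)) :=
  age_is_sonc_general A' c hc β cβ hcβ hnn
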